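/- For coprime positive integers a, b, the numbers sch(a,b,i) = (1/a)·C(b−1,i)·C(a+b−1−i,b) and Sch(a,b,i) = (1/a)·C(a,i)·C(a+b−1−i,b−i) satisfy the recurrence Sch(a,b,i) − sch(a,b,i−1) = sch(a,b,i) for all 1 ≤ i ≤ a−1, and sch(a,b,0) = Sch(a,b,0) = (1/(a+b))·C(a+b,a). -/

import Mathlib

/-- Steps of a (Schröder) lattice path: north, east, diagonal. -/
inductive Step : Type
  | N | E | D
deriving DecidableEq, Repr

/-- Total horizontal displacement of a path. -/
def eLen (p : List Step) : ℕ := p.count Step.E + p.count Step.D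

/-- Total vertical displacement of a path. -/
def nLen (p : List Step) : ℕ := p.count Step.N + p.count Step.D

/-- A lattice path uses only `N` and `E` steps. -/
def IsLatticePath (ν : List Step) : Prop := Step.D ∉ ν

/-- `colVal p x` is twice the starting height of the step of `p` crossing the vertical
strip between abscissas `x` and `x+1`, plus `1` if that step is diagonal.  Comparing these
values columnwise is equivalent to comparing the heights of the paths over each strip. -/
def colVal : List Step → ℕ → ℕ
  | [], _ => 0
  | Step.N :: p, x => colVal p x + 2
  | Step.E :: _, 0 => 0
  | Step.E :: p, x+1 => colVal p x
  | Step.D :: _, 0 => 1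
  | Step.D :: p, x+1 => colVal p x + 2

/-- `π` stays weakly above `ρ` (same endpoints intended). -/
def WeaklyAbove (π ρ : List Step) : Prop := ∀ x, colVal ρ x ≤ colVal π x

/-- Replace every peak (consecutive `NE`) of a path by a diagonal step; applied to `ν`
this gives the path `μ` of the large ν-Schröder path definition. -/
def cutPeaks : List Step → List Step
  | [] => []
  | Step.N :: Step.E :: p => Step.D :: cutPeaks p
  | s :: p => s :: cutPeaks p

/-- A ν-Dyck path: an `N,E` path with the same endpoints as `ν` staying weakly above `ν`. -/
def IsNuDyck (ν π : List Step) : Prop :=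
  Step.D ∉ π ∧ eLen π = eLen ν ∧ nLen π = nLen ν ∧ WeaklyAbove π ν

/-- A (small) ν-Schröder path: an `N,E,D` path with the same endpoints as `ν` staying weakly
above `ν` (this automatically forbids diagonal steps on the ν-diagonal). -/
def IsSmallSchroder (ν π : List Step) : Prop :=
  eLen π = eLen ν ∧ nLen π = nLen ν ∧ WeaklyAbove π ν

/-- A large ν-Schröder path: an `N,E,D` path with the same endpoints as `ν` staying weakly
above the path obtained from `ν` by replacing each peak by a diagonal step. -/
def IsLargeSchroder (ν π : List Step) : Prop :=
  eLen π = eLen ν ∧ nLen π = nLen ν ∧ WeaklyAbove π (cutPeaks ν)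

/-- Number of peaks (consecutive `NE` pairs). -/
def peaks (p : List Step) : ℕ := (p.zip p.tail).count (Step.N, Step.E)

/-- Number of valleys (consecutive `EN` pairs). -/
def valleys (p : List Step) : ℕ := (p.zip p.tail).count (Step.E, Step.N)

/-- Lattice points at which valleys of a path occur (starting the path at `(x,y)`). -/
def valleyPts : List Step → ℕ → ℕ → List (ℕ × ℕ)
  | [], _, _ => []
  | Step.E :: p, x, y =>
      (if p.head? = some Step.N then [(x+1, y)] else []) ++ valleyPts p (x+1) y
  | Step.N :: p, x, y => valleyPts p x (y+1)
  | Step.D :: p, x, y => valleyPts p (x+1) (y+1)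

/-- Lattice points at which high peaks (peaks strictly above `ν`) of a path occur. -/
def highPeakPts (ν : List Step) : List Step → ℕ → ℕ → List (ℕ × ℕ)
  | [], _, _ => []
  | Step.N :: p, x, y =>
      (if p.head? = some Step.E ∧ colVal ν x < 2*(y+1) then [(x, y+1)] else []) ++
        highPeakPts ν p x (y+1)
  | Step.E :: p, x, y => highPeakPts ν p (x+1) y
  | Step.D :: p, x, y => highPeakPts ν p (x+1) (y+1)

/-- Number of high peaks of `π` relative to `ν`. -/
def highPeaks (ν π : List Step) : ℕ := (highPeakPts ν π 0 0).length

/-- j-th ν-Narayana number: number of ν-Dyck paths with exactly `j` valleys. -/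
noncomputable def Nar (ν : List Step) (j : ℕ) : ℕ :=
  Nat.card {π : List Step // IsNuDyck ν π ∧ valleys π = j}

/-- Number of small ν-Schröder paths with exactly `i` diagonal steps. -/
noncomputable def schNum (ν : List Step) (i : ℕ) : ℕ :=
  Nat.card {π : List Step // IsSmallSchroder ν π ∧ π.count Step.D = i}

/-- `lowH ν x` is the lowest height of a point of `ν` at abscissa `x`. -/
def lowH : List Step → ℕ → ℕ
  | _, 0 => 0
  | [], _+1 => 0
  | Step.N :: p, x+1 => lowH p (x+1) + 1
  | Step.E :: p, x+1 => lowH p x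
  | Step.D :: p, x+1 => lowH p x + 1

/-- The lowest lattice path from `(0,0)` to `(b,a)` weakly above the line segment
from `(0,0)` to `(b,a)`. -/
def nuAB (a b : ℕ) : List Step :=
  (List.range b).flatMap (fun x =>
    List.replicate (((x+1)*a + b - 1)/b - (x*a + b - 1)/b) Step.N ++ [Step.E])

/-- Number of large rational `(a,b)`-Schröder paths with `i` diagonal steps. -/
noncomputable def largeCount (a b i : ℕ) : ℕ :=
  Nat.card {π : List Step // IsLargeSchroder (nuAB a b) π ∧ π.count Step.D = i}

/-- Number of small rational `(a,b)`-Schröder paths with `i` diagonal steps. -/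
noncomputable def smallCount (a b i : ℕ) : ℕ :=
  Nat.card {π : List Step // IsSmallSchroder (nuAB a b) π ∧ π.count Step.D = i}

/-- Binomial coefficient with an integer lower entry (zero when negative). -/
def chooseZ (n : ℕ) (k : ℤ) : ℕ := if 0 ≤ k then n.choose k.toNat else 0

/-- The region weakly above `ν` in the rectangle `[0,b] × [0,a]`. -/
def InRegion (ν : List Step) (p : ℕ × ℕ) : Prop :=
  p.1 ≤ eLen ν ∧ p.2 ≤ nLen ν ∧ lowH ν p.1 ≤ p.2

/-- Two points of the region are ν-incompatible if one is strictly southwest of the other and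
the rectangle they span lies in the region (equivalently its bottom-right corner does). -/
def Incompat (ν : List Step) (p q : ℕ × ℕ) : Prop :=
  ((p.1 < q.1 ∧ p.2 < q.2) ∨ (q.1 < p.1 ∧ q.2 < p.2)) ∧
    InRegion ν (max p.1 q.1, min p.2 q.2)

/-- A ν-binary tree: a maximal set of pairwise ν-compatible points of the region. -/
def IsBinaryTree (ν : List Step) (T : Finset (ℕ × ℕ)) : Prop :=
  (∀ p ∈ T, InRegion ν p) ∧ (∀ p ∈ T, ∀ q ∈ T, ¬ Incompat ν p q) ∧
    ∀ r, InRegion ν r → (∀ p ∈ T, ¬ Incompat ν r p) → r ∈ T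

/-- A ν-Schröder tree: pairwise ν-compatible points of the region containing the root
`(0,a)` and meeting every row and every column. -/
def IsSchroderTree (ν : List Step) (T : Finset (ℕ × ℕ)) : Prop :=
  (∀ p ∈ T, InRegion ν p) ∧ (∀ p ∈ T, ∀ q ∈ T, ¬ Incompat ν p q) ∧
    (0, nLen ν) ∈ T ∧ (∀ y ≤ nLen ν, ∃ p ∈ T, p.2 = y) ∧ (∀ x ≤ eLen ν, ∃ p ∈ T, p.1 = x)

/-- One contraction step: delete a node, provided the result is still a ν-Schröder tree. -/
def ContractStep (ν : List Step) (T T' : Finset (ℕ × ℕ)) : Prop :=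
  ∃ q ∈ T, T' = T.erase q ∧ IsSchroderTree ν T'

/-- `p` is a leaf of the (plane tree associated to the) node set `T`: no node strictly below
it in its column and none strictly to its right in its row. -/
def IsLeafIn (T : Finset (ℕ × ℕ)) (p : ℕ × ℕ) : Prop :=
  (∀ q ∈ T, ¬(q.1 = p.1 ∧ q.2 < p.2)) ∧ (∀ q ∈ T, ¬(q.2 = p.2 ∧ p.1 < q.1))

/-- Starting points of vertical runs and ending points of horizontal runs of `ν`. -/
def leafPts (ν : List Step) : Finset (ℕ × ℕ) :=
  (valleyPts ν 0 0).toFinset ∪ (if ν.head? = some Step.N then {((0 : ℕ), (0 : ℕ))} else ∅) ∪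
    (if ν.getLast? = some Step.E then {(eLen ν, nLen ν)} else ∅)

/-- `horizNu ν x y`: maximal number of east steps that can be placed starting at `(x,y)`
before crossing `ν` (staying within the bounding rectangle). -/
def horizNu (ν : List Step) (x y : ℕ) : ℕ :=
  ((Finset.Icc 1 (eLen ν - x)).filter (fun k => lowH ν (x + k) ≤ y)).card

/-- No `N` step of the given path (started at `(x,y)`) has initial point with
`horizNu`-value `h`. -/
def noNAt (ν : List Step) (h : ℕ) : List Step → ℕ → ℕ → Prop
  | [], _, _ => True
  | Step.N :: p, x, y => horizNu ν x y ≠ h ∧ noNAt ν h p x (y+1)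
  | Step.E :: p, x, y => noNAt ν h p (x+1) y
  | Step.D :: p, x, y => noNAt ν h p (x+1) (y+1)

/-- Right contraction: replace a consecutive `EN` pair (a valley) by a `D` step. -/
def RightC (μ lam : List Step) : Prop :=
  ∃ p q, μ = p ++ Step.E :: Step.N :: q ∧ lam = p ++ Step.D :: q

/-- Left contraction: delete an `E` step together with the most recent preceding `N` step
whose initial point has the same `horizNu` statistic as the initial point of the `E` step,
shift the intermediate subpath, and place a `D` step at the initial point of the `N` step. -/
def LeftC (ν μ lam : List Step) : Prop :=
  ∃ p m q, μ = p ++ Step.N :: (m ++ Step.E :: q) ∧ lam = p ++ Step.D :: (m ++ q) ∧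
    horizNu ν (eLen p) (nLen p)
      = horizNu ν (eLen (p ++ Step.N :: m)) (nLen (p ++ Step.N :: m)) ∧
    noNAt ν (horizNu ν (eLen (p ++ Step.N :: m)) (nLen (p ++ Step.N :: m)))
      m (eLen p) (nLen p + 1)

/-- Diagonal contraction: delete an `E` step ending at the initial point `r` of a `D` step,
together with the most recent preceding `N` step whose initial point `s` satisfies
`horizNu s = horizNu r`, shift the intermediate subpath, and place a `D` step at `s`. -/
def DiagC (ν μ lam : List Step) : Prop :=
  ∃ p m q, μ = p ++ Step.N :: (m ++ Step.E :: Step.D :: q) ∧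
    lam = p ++ Step.D :: (m ++ Step.D :: q) ∧
    horizNu ν (eLen p) (nLen p)
      = horizNu ν (eLen (p ++ Step.N :: m) + 1) (nLen (p ++ Step.N :: m)) ∧
    noNAt ν (horizNu ν (eLen (p ++ Step.N :: m) + 1) (nLen (p ++ Step.N :: m)))
      m (eLen p) (nLen p + 1)

/-- Cover relation of the contraction poset of ν-Schröder paths. -/
def Covers (ν μ lam : List Step) : Prop :=
  IsSmallSchroder ν μ ∧ IsSmallSchroder ν lam ∧
    (RightC μ lam ∨ LeftC ν μ lam ∨ DiagC ν μ lam)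

/-- The Morse matching: `σ` (having a `D` step preceded by no valley) is matched with the
path `π` obtained by replacing the first such `D` step by `EN`. -/
def MorseM (ν : List Step) : Set (List Step × List Step) :=
  { z | ∃ p q, Step.D ∉ p ∧ valleys p = 0 ∧
      z.2 = p ++ Step.D :: q ∧ z.1 = p ++ Step.E :: Step.N :: q ∧ IsSmallSchroder ν z.2 }

/-- Twice the area between a small ν-Schröder path and `ν`. -/
def area2 (ν π : List Step) : ℕ :=
  ∑ x ∈ Finset.range (eLen ν), (colVal π x - colVal ν x)

/-- An `(I,J̄)`-forest: increasing, non-crossing arcs. -/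
def IsIJForest (I J : Finset ℕ) (F : Finset (ℕ × ℕ)) : Prop :=
  (∀ a ∈ F, a.1 ∈ I ∧ a.2 ∈ J ∧ a.1 < a.2) ∧
    (∀ a ∈ F, ∀ a' ∈ F, ¬(a.1 < a'.1 ∧ a'.1 < a.2 ∧ a.2 < a'.2))

/-- A covering `(I,J̄)`-forest: contains the arc `(1,n)` and has no isolated node. -/
def IsCoveringForest (n : ℕ) (I J : Finset ℕ) (F : Finset (ℕ × ℕ)) : Prop :=
  IsIJForest I J F ∧ (1, n) ∈ F ∧
    (∀ i ∈ I, ∃ a ∈ F, a.1 = i) ∧ (∀ j ∈ J, ∃ a ∈ F, a.2 = j)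

/-- The lattice path read off from the interleaving of `I` and `J̄` (elements `2,…,n-1`,
`E` for elements of `I`, `N` for the others). -/
def nuOf (n : ℕ) (I : Finset ℕ) : List Step :=
  (List.range' 2 (n - 2)).map (fun k => if k ∈ I then Step.E else Step.N)

/-! Put `a = m + i` and `b = i + j`. Each of the three products in the recurrence is a rational
multiple of the trinomial coefficient `(m+i+j)! / (m! i! j!)`, with factors `(m+i)/(m+i+j)`,
`i/(i+j)` and `jm/((i+j)(m+i+j))`, and the first factor is the sum of the other two. For `i ≥ b`
both sides of the recurrence vanish. The initial values come from `a·C(a+b,a) = (a+b)·C(a+b-1,a-1)`. -/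

open Nat

theorem choose_mul_choose_eq_choose_mul_choose_add (i j m : ℕ) :
    (m + i + 2).choose (i + 1) * (m + i + j + 2).choose (j + 1) =
      (i + j + 1).choose i * (m + i + j + 3).choose (m + 1) +
        (i + j + 1).choose (i + 1) * (m + i + j + 2).choose m := by
  have key : ((m + i + 2).choose (i + 1) * (m + i + j + 2).choose (j + 1) : ℚ) =
      (i + j + 1).choose i * (m + i + j + 3).choose (m + 1) +
        (i + j + 1).choose (i + 1) * (m + i + j + 2).choose m := by
    simp only [cast_choose ℚ (show i + 1 ≤ m + i + 2 by omega),
      cast_choose ℚ (show j + 1 ≤ m + i + j + 2 by omega),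
      cast_choose ℚ (show i ≤ i + j + 1 by omega),
      cast_choose ℚ (show m + 1 ≤ m + i + j + 3 by omega),
      cast_choose ℚ (show i + 1 ≤ i + j + 1 by omega),
      cast_choose ℚ (show m ≤ m + i + j + 2 by omega),
      show m + i + 2 - (i + 1) = m + 1 by omega, show m + i + j + 2 - (j + 1) = m + i + 1 by omega,
      show i + j + 1 - i = j + 1 by omega, show m + i + j + 3 - (m + 1) = i + j + 2 by omega,
      show i + j + 1 - (i + 1) = j by omega, show m + i + j + 2 - m = i + j + 2 by omega,
      show m + i + j + 3 = (m + i + j + 2) + 1 by omega, factorial_succ]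
    push_cast
    field_simp
    ring
  exact_mod_cast key

theorem choose_add_sub_one_div_eq (a b : ℕ) (ha : 0 < a) :
    ((a + b - 1).choose b : ℚ) / a = (a + b).choose a / (a + b) := by
  obtain ⟨a, rfl⟩ := exists_add_one_eq.mpr ha
  have h := add_one_mul_choose_eq (a + b) a
  rw [choose_symm_add, show a + b + 1 = a + 1 + b by omega] at h
  rw [show a + 1 + b - 1 = a + b by omega, div_eq_div_iff (by positivity) (by positivity), mul_comm]
  exact_mod_cast h

theorem chooseZ_natCast (n k : ℕ) : chooseZ n k = n.choose k := by
  simp [chooseZ]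

theorem chooseZ_of_neg {n : ℕ} {k : ℤ} (hk : k < 0) : chooseZ n k = 0 :=
  if_neg hk.not_ge

theorem choose_mul_chooseZ_eq_add {a b i : ℕ} (hb : 0 < b) (hi : 0 < i) (hia : i < a) :
    a.choose i * chooseZ (a + b - 1 - i) ((b : ℤ) - i) =
      (b - 1).choose (i - 1) * (a + b - i).choose b +
        (b - 1).choose i * (a + b - 1 - i).choose b := by
  rcases lt_trichotomy i b with hib | rfl | hib
  · obtain ⟨k, rfl⟩ := exists_add_one_eq.mpr hi
    obtain ⟨m, rfl⟩ : ∃ m, a = m + k + 2 := ⟨a - k - 2, by omega⟩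
    obtain ⟨j, rfl⟩ : ∃ j, b = k + j + 2 := ⟨b - k - 2, by omega⟩
    rw [show ((k + j + 2 : ℕ) : ℤ) - (k + 1 : ℕ) = (j + 1 : ℕ) by push_cast; ring, chooseZ_natCast,
      show m + k + 2 + (k + j + 2) - 1 - (k + 1) = m + k + j + 2 by omega,
      show m + k + 2 + (k + j + 2) - (k + 1) = m + k + j + 3 by omega,
      show k + j + 2 - 1 = k + j + 1 by omega, add_tsub_cancel_right,
      choose_symm_of_eq_add (show m + k + j + 3 = k + j + 2 + (m + 1) by omega),
      choose_symm_of_eq_add (show m + k + j + 2 = k + j + 2 + m by omega)]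
    exact choose_mul_choose_eq_choose_mul_choose_add k j m
  · rw [sub_self, choose_eq_zero_of_lt (show i - 1 < i by omega), show a + i - i = a by omega]
    simp [chooseZ]
  · rw [chooseZ_of_neg (by omega), choose_eq_zero_of_lt (show b - 1 < i - 1 by omega),
      choose_eq_zero_of_lt (show b - 1 < i by omega)]
    simp

theorem schroder_recurrence_general (a b : ℕ) (ha : 0 < a) (hb : 0 < b) :
    (∀ i : ℕ, 1 ≤ i → i ≤ a - 1 →
      (Nat.choose a i * chooseZ (a + b - 1 - i) ((b : ℤ) - i) : ℚ) / a
          - (Nat.choose (b - 1) (i - 1) * Nat.choose (a + b - i) b : ℚ) / a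
        = (Nat.choose (b - 1) i * Nat.choose (a + b - 1 - i) b : ℚ) / a) ∧
    (Nat.choose (b - 1) 0 * Nat.choose (a + b - 1) b : ℚ) / a
      = (Nat.choose (a + b) a : ℚ) / (a + b) ∧
    (Nat.choose a 0 * chooseZ (a + b - 1) ((b : ℤ)) : ℚ) / a
      = (Nat.choose (a + b) a : ℚ) / (a + b) := by
  refine ⟨fun i hi hia => ?_, ?_, ?_⟩
  · rw [div_sub_div_same]
    congr 1
    rw [sub_eq_iff_eq_add']
    exact_mod_cast choose_mul_chooseZ_eq_add hb hi (by omega)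
  · rw [choose_zero_right, cast_one, one_mul, choose_add_sub_one_div_eq a b ha]
  · rw [choose_zero_right, chooseZ_natCast, cast_one, one_mul, choose_add_sub_one_div_eq a b ha]

/-- For coprime positive `a, b`, the closed forms
`sch(a,b,i) = (1/a)·C(b−1,i)·C(a+b−1−i,b)` and `Sch(a,b,i) = (1/a)·C(a,i)·C(a+b−1−i,b−i)`
satisfy `Sch(a,b,i) − sch(a,b,i−1) = sch(a,b,i)` for `1 ≤ i ≤ a−1`, and
`sch(a,b,0) = Sch(a,b,0) = (1/(a+b))·C(a+b,a)`. -/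
theorem schroder_recurrence (a b : ℕ) (ha : 0 < a) (hb : 0 < b) (hco : Nat.Coprime a b) :
    (∀ i : ℕ, 1 ≤ i → i ≤ a - 1 →
      (Nat.choose a i * chooseZ (a + b - 1 - i) ((b : ℤ) - i) : ℚ) / a
          - (Nat.choose (b - 1) (i - 1) * Nat.choose (a + b - i) b : ℚ) / a
        = (Nat.choose (b - 1) i * Nat.choose (a + b - 1 - i) b : ℚ) / a) ∧
    (Nat.choose (b - 1) 0 * Nat.choose (a + b - 1) b : ℚ) / a
      = (Nat.choose (a + b) a : ℚ) / (a + b) ∧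
    (Nat.choose a 0 * chooseZ (a + b - 1) ((b : ℤ)) : ℚ) / a
      = (Nat.choose (a + b) a : ℚ) / (a + b) :=
  schroder_recurrence_general a b ha hb
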